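/- Let $(L,\lambda)$ be a purely atomic probability space (with atoms indexed by a countable set) such that $\sum_{\ell\in L} -\lambda(\ell)\log\lambda(\ell) = \infty$. Then $L$ can be partitioned into finite sets $(I_n)_{n\in\mathbb{N}}$ such that $\sum_{\ell\in I_n} -\lambda(\ell)\log\lambda(\ell) > c + \log 2$ for every $n$, for any fixed $c > 0$; moreover, for the partitions $\mathcal{L}_n = \{L\setminus I_n\}\cup\{\{\ell\}:\ell\in I_n\}$ one has $H(\mathcal{L}_n \mid \bigvee_{k\neq n}\mathcal{L}_k) = H(\mathcal{L}_n) - H(\{I_n, L\setminus I_n\}) > c$. -/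

import Mathlib

/-!
Enumerate the atoms and cut the enumeration into consecutive finite blocks `Iₙ`, each of
entropy `∑_{ℓ ∈ Iₙ} -ν{ℓ} log ν{ℓ} > c + log 2`; this is possible because the total entropy
diverges. Each `Iₙ` is measurable for, and an atom of, the σ-algebra generated by the
partitions `𝓛ₖ`, `k ≠ n`. So conditioning on it replaces `ν{ℓ}` by `ν{ℓ} / ν(Iₙ)` for
`ℓ ∈ Iₙ` and leaves `L \ Iₙ` alone, which gives
`H(𝓛ₙ | ⋁_{k ≠ n} 𝓛ₖ) = ∑_{ℓ ∈ Iₙ} -ν{ℓ} log ν{ℓ} + ν(Iₙ) log ν(Iₙ) = H(𝓛ₙ) - H({Iₙ, L \ Iₙ})`.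
A two-set partition has entropy at most `log 2`, so this exceeds `c`.
-/

open MeasureTheory Real
open scoped ENNReal symmDiff

variable {L : Type*}

/-- Shannon entropy (in `[0,∞]`) of a countable partition given as a labeling. -/
noncomputable def ent {ι : Type*} [MeasurableSpace L] [Countable ι]
    (ν : Measure L) (p : L → ι) : ℝ≥0∞ :=
  ∑' i : ι, ENNReal.ofReal (negMulLog (ν (p ⁻¹' {i})).toReal)

/-- Real-valued Shannon entropy. -/
noncomputable def entR {ι : Type*} [MeasurableSpace L] [Countable ι]
    (ν : Measure L) (p : L → ι) : ℝ := (ent ν p).toReal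

/-- Conditional Shannon entropy `H(p | F)` of a countable partition relative
to a sub-σ-algebra `F`. -/
noncomputable def condEntSig {ι : Type*} [m0 : MeasurableSpace L] [Countable ι]
    (ν : Measure L) (F : MeasurableSpace L) (p : L → ι) : ℝ :=
  ∑' i : ι, ∫ x in p ⁻¹' {i},
    -Real.log ((ν[Set.indicator (p ⁻¹' {i}) (fun _ => (1:ℝ)) | F]) x) ∂ν

open Finset in
lemma exists_strictMono_lt_sum_Ico {f : ℕ → ℝ} (hf : 0 ≤ f) (hns : ¬ Summable f) (b : ℝ) :
    ∃ t : ℕ → ℕ, t 0 = 0 ∧ StrictMono t ∧ ∀ n, b < ∑ k ∈ Ico (t n) (t (n + 1)), f k := by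
  have htend := (not_summable_iff_tendsto_nat_atTop_of_nonneg hf).1 hns
  have hnext : ∀ m, ∃ M, m < M ∧ b < ∑ k ∈ Ico m M, f k := by
    intro m
    obtain ⟨M₀, hM₀⟩ :=
      Filter.eventually_atTop.1 (htend.eventually_gt_atTop (∑ k ∈ range m, f k + b))
    refine ⟨max (m + 1) M₀, by omega, ?_⟩
    rw [sum_Ico_eq_sub _ (by omega)]
    linarith [hM₀ _ (le_max_right (m + 1) M₀)]
  choose next hnext_gt hnext_sum using hnext
  refine ⟨fun n => next^[n] 0, rfl, strictMono_nat_of_lt_succ fun n => ?_, fun n => ?_⟩ <;>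
    simp only [Function.iterate_succ_apply']
  exacts [hnext_gt _, hnext_sum _]

lemma exists_finite_fibers_lt_tsum_nat {f : ℕ → ℝ} (hf : 0 ≤ f) (hns : ¬ Summable f) (b : ℝ) :
    ∃ I : ℕ → ℕ, (∀ n, (I ⁻¹' {n}).Finite) ∧ ∀ n, b < ∑' k : I ⁻¹' {n}, f k := by
  obtain ⟨t, ht0, ht, hsum⟩ := exists_strictMono_lt_sum_Ico hf hns b
  have hex : ∀ k, ∃ n, k < t (n + 1) := fun k => ⟨k, k.lt_succ_self.trans_le ht.le_apply⟩
  have hfiber : ∀ n, (fun k => Nat.find (hex k)) ⁻¹' {n} = ↑(Finset.Ico (t n) (t (n + 1))) := by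
    intro n
    ext k
    simp only [Set.mem_preimage, Set.mem_singleton_iff, Nat.find_eq_iff, Finset.coe_Ico,
      Set.mem_Ico, not_lt]
    suffices (∀ m < n, t (m + 1) ≤ k) ↔ t n ≤ k by rw [this, and_comm]
    cases n with
    | zero => simp [ht0]
    | succ n => exact ⟨fun h => h n n.lt_succ_self, fun h m hm => (ht.monotone hm).trans h⟩
  refine ⟨_, fun n => hfiber n ▸ Finset.finite_toSet _, fun n => ?_⟩
  rw [hfiber, Finset.tsum_subtype']
  exact hsum n

lemma exists_finite_fibers_lt_tsum {α : Type*} [Countable α] {g : α → ℝ} (hg : 0 ≤ g)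
    (hns : ¬ Summable g) (b : ℝ) :
    ∃ I : α → ℕ, (∀ n, (I ⁻¹' {n}).Finite) ∧ ∀ n, b < ∑' x : I ⁻¹' {n}, g x := by
  have : Infinite α := not_finite_iff_infinite.1 fun _ => hns .of_finite
  obtain ⟨e⟩ := nonempty_equiv_of_countable (α := ℕ) (β := α)
  obtain ⟨I, hfin, hsum⟩ :=
    exists_finite_fibers_lt_tsum_nat (f := g ∘ e) (fun k => hg _) (by rwa [e.summable_iff]) b
  refine ⟨I ∘ e.symm, fun n => (hfin n).preimage (f := e.symm) e.symm.injective.injOn, fun n => ?_⟩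
  have hmem : ∀ k, k ∈ I ⁻¹' {n} ↔ e k ∈ (I ∘ e.symm) ⁻¹' {n} := fun k => by simp
  exact (hsum n).trans_eq ((e.subtypeEquiv hmem).tsum_eq fun x => g x)

lemma tsum_option_eq_add_sum {α M : Type*} [AddCommMonoid M] [TopologicalSpace M]
    {f : Option α → M} (s : Finset α) (hf : ∀ a ∉ s, f (some a) = 0) :
    ∑' j, f j = f none + ∑ a ∈ s, f (some a) := by
  rw [← Finset.sum_insertNone, tsum_eq_sum]
  rintro (_ | a) hj
  · simp at hj
  · exact hf a (by simpa using hj)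

lemma negMulLog_measureReal_nonneg {α : Type*} [MeasurableSpace α] (μ : Measure α)
    [IsProbabilityMeasure μ] (s : Set α) : 0 ≤ negMulLog (μ.real s) :=
  negMulLog_nonneg measureReal_nonneg measureReal_le_one

lemma entR_prop {α : Type*} [MeasurableSpace α] (μ : Measure α) [IsProbabilityMeasure μ]
    {p : α → Prop} (hp : MeasurableSet {x | p x}) :
    entR μ p = binEntropy (μ.real {x | p x}) := by
  have hTrue : p ⁻¹' {True} = {x | p x} := by ext; simp
  have hFalse : p ⁻¹' {False} = {x | p x}ᶜ := by ext; simp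
  simp only [entR, ent, ← measureReal_def]
  rw [tsum_fintype, Fintype.univ_Prop, Finset.sum_pair (by simp), hTrue, hFalse,
    ENNReal.toReal_add ENNReal.ofReal_ne_top ENNReal.ofReal_ne_top,
    ENNReal.toReal_ofReal (negMulLog_measureReal_nonneg μ _),
    ENNReal.toReal_ofReal (negMulLog_measureReal_nonneg μ _),
    binEntropy_eq_negMulLog_add_negMulLog_one_sub, ← probReal_compl_eq_one_sub hp]

/-- The partition `{α \ A} ∪ {{a} : a ∈ A}`, encoded as a labeling. -/
def singletonsOn {α : Type*} [DecidableEq α] (A : Finset α) (x : α) : Option α :=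
  if x ∈ A then some x else none

section singletonsOn

variable {α : Type*} [DecidableEq α] {A : Finset α}

@[simp]
lemma singletonsOn_preimage_none : singletonsOn A ⁻¹' {none} = (↑A)ᶜ := by
  ext x
  simp [singletonsOn]

lemma singletonsOn_preimage_some_of_mem {a : α} (ha : a ∈ A) :
    singletonsOn A ⁻¹' {some a} = {a} := by
  ext x
  simp only [singletonsOn, Set.mem_preimage, Set.mem_singleton_iff]
  split_ifs <;> grind

lemma singletonsOn_preimage_some_of_notMem {a : α} (ha : a ∉ A) :
    singletonsOn A ⁻¹' {some a} = ∅ := by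
  ext x
  simp only [singletonsOn, Set.mem_preimage, Set.mem_singleton_iff, Set.mem_empty_iff_false]
  split_ifs <;> grind

lemma entR_singletonsOn [Countable α] [MeasurableSpace α] (μ : Measure α)
    [IsProbabilityMeasure μ] :
    entR μ (singletonsOn A) = negMulLog (μ.real (↑A)ᶜ) + ∑ a ∈ A, negMulLog (μ.real {a}) := by
  simp only [entR, ent, ← measureReal_def]
  rw [tsum_option_eq_add_sum A fun a ha => by
      simp [singletonsOn_preimage_some_of_notMem ha],
    ENNReal.toReal_add ENNReal.ofReal_ne_top
      (ENNReal.sum_ne_top.2 fun _ _ => ENNReal.ofReal_ne_top),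
    ENNReal.toReal_sum fun _ _ => ENNReal.ofReal_ne_top, singletonsOn_preimage_none,
    ENNReal.toReal_ofReal (negMulLog_measureReal_nonneg μ _)]
  congr 1
  refine Finset.sum_congr rfl fun a ha => ?_
  rw [singletonsOn_preimage_some_of_mem ha,
    ENNReal.toReal_ofReal (negMulLog_measureReal_nonneg μ _)]

end singletonsOn

section condExp

variable {α : Type*} {m m0 : MeasurableSpace α} {μ : Measure α} [IsFiniteMeasure μ]

lemma condExp_indicator_ae_eq_of_subset_atom (hm : m ≤ m0) {A B : Set α}
    (hA : MeasurableSet[m] A) (hatom : ∀ s, MeasurableSet[m] s → Disjoint s A ∨ A ⊆ s)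
    (hB : MeasurableSet B) (hBA : B ⊆ A) :
    μ[B.indicator (fun _ => (1 : ℝ)) | m] =ᵐ[μ] A.indicator fun _ => μ.real B / μ.real A := by
  refine (ae_eq_condExp_of_forall_setIntegral_eq hm ((integrable_const 1).indicator hB)
    (fun s _ _ => ((integrable_const _).indicator (hm _ hA)).integrableOn) (fun s hs _ => ?_)
    (stronglyMeasurable_const.indicator hA).aestronglyMeasurable).symm
  rw [setIntegral_indicator (hm _ hA), setIntegral_indicator hB, setIntegral_const,
    setIntegral_const]
  rcases hatom s hs with hdisj | hsub
  · rw [hdisj.inter_eq, (hdisj.mono_right hBA).inter_eq]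
    simp
  · rw [Set.inter_eq_right.2 hsub, Set.inter_eq_right.2 (hBA.trans hsub)]
    rcases eq_or_ne (μ.real A) 0 with h0 | h0
    · have : μ.real B = 0 := le_antisymm (h0 ▸ measureReal_mono hBA) measureReal_nonneg
      simp [h0, this]
    · simp [mul_div_cancel₀ _ h0]

lemma setIntegral_neg_log_condExp_indicator_eq_zero (hm : m ≤ m0) {S : Set α}
    (hS : MeasurableSet[m] S) :
    ∫ x in S, -log (μ[S.indicator (fun _ => (1 : ℝ)) | m] x) ∂μ = 0 := by
  rw [condExp_of_stronglyMeasurable hm (stronglyMeasurable_const.indicator hS)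
    ((integrable_const 1).indicator (hm _ hS))]
  refine (setIntegral_congr_fun (hm _ hS) fun x hx => ?_).trans (integral_zero _ _)
  simp [Set.indicator_of_mem hx]

end condExp

lemma condEntSig_singletonsOn {α : Type*} [DecidableEq α] [Countable α]
    {F m0 : MeasurableSpace α} [MeasurableSingletonClass α] (μ : Measure α) [IsFiniteMeasure μ]
    (A : Finset α) (hA : MeasurableSet[F] (A : Set α))
    (hatom : ∀ s, MeasurableSet[F] s → Disjoint s A ∨ ↑A ⊆ s) :
    condEntSig μ F (singletonsOn A) = ∑ a ∈ A, negMulLog (μ.real {a}) - negMulLog (μ.real A) := by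
  have hF : F ≤ m0 := fun s _ => s.to_countable.measurableSet
  have hsingleton : ∀ a ∈ A,
      ∫ x in {a}, -log (μ[({a} : Set α).indicator (fun _ => (1 : ℝ)) | F] x) ∂μ
        = negMulLog (μ.real {a}) + μ.real {a} * log (μ.real A) := by
    intro a ha
    have hce := condExp_indicator_ae_eq_of_subset_atom (μ := μ) hF hA hatom
      (measurableSet_singleton a) (Set.singleton_subset_iff.2 ha)
    rw [integral_congr_ae (ae_restrict_of_ae (hce.mono fun x hx => by rw [hx])),
      integral_singleton, Set.indicator_of_mem ha, smul_eq_mul]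
    rcases eq_or_ne (μ.real {a}) 0 with h0 | h0
    · simp [h0]
    · have hA0 : μ.real A ≠ 0 :=
        ((measureReal_nonneg.lt_of_ne' h0).trans_le
          (measureReal_mono (Set.singleton_subset_iff.2 ha))).ne'
      rw [log_div h0 hA0, negMulLog]
      ring
  rw [condEntSig, tsum_option_eq_add_sum A fun a ha => by
      simp [singletonsOn_preimage_some_of_notMem ha],
    singletonsOn_preimage_none, setIntegral_neg_log_condExp_indicator_eq_zero hF hA.compl, zero_add,
    Finset.sum_congr rfl fun a ha => by rw [singletonsOn_preimage_some_of_mem ha, hsingleton a ha],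
    Finset.sum_add_distrib, ← Finset.sum_mul, sum_measureReal_singleton, negMulLog]
  ring

lemma MeasurableSpace.disjoint_or_subset_of_measurableSet_generateFrom {α : Type*}
    {C : Set (Set α)} {A : Set α} (hC : ∀ t ∈ C, Disjoint t A ∨ A ⊆ t) {s : Set α}
    (hs : MeasurableSet[generateFrom C] s) : Disjoint s A ∨ A ⊆ s := by
  induction s, hs using generateFrom_induction with
  | hC t ht _ => exact hC t ht
  | empty => exact .inl (Set.empty_disjoint A)
  | compl t _ ih => exact ih.symm.imp LE.le.disjoint_compl_left Disjoint.subset_compl_left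
  | iUnion s _ ih =>
    by_cases h : ∃ i, A ⊆ s i
    · obtain ⟨i, hi⟩ := h
      exact .inr (hi.trans (Set.subset_iUnion s i))
    · exact .inl (Set.disjoint_iUnion_left.2 fun i => (ih i).resolve_right (not_exists.1 h i))

/-- The σ-algebra `⋁_{k ≠ n} 𝓛ₖ` generated by the partitions of the other blocks. -/
abbrev otherBlocksSigma {α : Type*} (I : α → ℕ) (n : ℕ) : MeasurableSpace α :=
  MeasurableSpace.generateFrom {S | ∃ k, k ≠ n ∧ ∃ j : Option α,
    S = (fun x => if I x = k then some x else none) ⁻¹' {j}}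

section otherBlocksSigma

variable {α : Type*} (I : α → ℕ) (n : ℕ)

lemma measurableSet_otherBlocksSigma_fiber : MeasurableSet[otherBlocksSigma I n] (I ⁻¹' {n}) := by
  have : I ⁻¹' {n} = ⋂ k ∈ {k | k ≠ n}, (fun x => if I x = k then some x else none) ⁻¹' {none} := by
    ext x
    simp only [Set.mem_preimage, Set.mem_singleton_iff, Set.mem_iInter, Set.mem_ofPred_eq,
      ite_eq_right_iff, reduceCtorEq, imp_false]
    exact ⟨fun hx k hk hxk => hk (hxk ▸ hx), fun h => of_not_not fun hx => h _ hx rfl⟩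
  rw [this]
  exact .biInter (Set.to_countable _) fun k hk =>
    MeasurableSpace.measurableSet_generateFrom ⟨k, hk, none, rfl⟩

lemma disjoint_or_fiber_subset_of_measurableSet_otherBlocksSigma {s : Set α}
    (hs : MeasurableSet[otherBlocksSigma I n] s) : Disjoint s (I ⁻¹' {n}) ∨ I ⁻¹' {n} ⊆ s := by
  refine MeasurableSpace.disjoint_or_subset_of_measurableSet_generateFrom ?_ hs
  rintro _ ⟨k, hk, j, rfl⟩
  cases j with
  | none => exact .inr fun x (hx : I x = n) => by simp [hx, hk.symm]
  | some a => exact .inl (Set.disjoint_left.2 fun x hx (hxn : I x = n) => by grind)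

end otherBlocksSigma

open Classical in
theorem stmt10_general [Countable L] [MeasurableSpace L] [MeasurableSingletonClass L]
    (ν : Measure L) [IsProbabilityMeasure ν]
    (hinf : ∑' ℓ : L, ENNReal.ofReal (negMulLog (ν {ℓ}).toReal) = ⊤)
    (c : ℝ) :
    ∃ I : L → ℕ,
      (∀ n, (I ⁻¹' {n}).Finite) ∧
      (∀ n, c + Real.log 2 < ∑' ℓ : (I ⁻¹' {n} : Set L), negMulLog (ν {(ℓ : L)}).toReal) ∧
      (∀ n : ℕ,
        condEntSig ν
          (MeasurableSpace.generateFrom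
            {S : Set L | ∃ k : ℕ, k ≠ n ∧ ∃ j : Option L,
              S = (fun x => if I x = k then some x else none) ⁻¹' {j}})
          (fun x => if I x = n then some x else none)
        = entR ν (fun x => if I x = n then some x else none)
            - entR ν (fun x => I x = n) ∧
        c < condEntSig ν
          (MeasurableSpace.generateFrom
            {S : Set L | ∃ k : ℕ, k ≠ n ∧ ∃ j : Option L,
              S = (fun x => if I x = k then some x else none) ⁻¹' {j}})
          (fun x => if I x = n then some x else none)) := by
  have hnonneg : ∀ ℓ : L, 0 ≤ negMulLog (ν.real {ℓ}) := fun ℓ => negMulLog_measureReal_nonneg ν _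
  have hns : ¬ Summable fun ℓ : L => negMulLog (ν.real {ℓ}) := fun hs =>
    ENNReal.ofReal_ne_top (hinf ▸ ENNReal.ofReal_tsum_of_nonneg hnonneg hs)
  obtain ⟨I, hfin, hsum⟩ := exists_finite_fibers_lt_tsum hnonneg hns (c + log 2)
  refine ⟨I, hfin, hsum, fun n => ?_⟩
  set A := (hfin n).toFinset
  have hA : (A : Set L) = {x | I x = n} := (hfin n).coe_toFinset
  have hlabel : (fun x => if I x = n then some x else none) = singletonsOn A := by
    ext x
    simp [A, singletonsOn]
  have hsumA : c + log 2 < ∑ a ∈ A, negMulLog (ν.real {a}) := by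
    rw [← Finset.tsum_subtype', hA]
    exact hsum n
  have hcond : condEntSig ν (otherBlocksSigma I n) (singletonsOn A)
      = entR ν (singletonsOn A) - entR ν (fun x => I x = n) := by
    rw [condEntSig_singletonsOn ν A (hA ▸ measurableSet_otherBlocksSigma_fiber I n)
        fun s hs => hA ▸ disjoint_or_fiber_subset_of_measurableSet_otherBlocksSigma I n hs,
      entR_singletonsOn, entR_prop ν (Set.to_countable _).measurableSet, ← hA,
      binEntropy_eq_negMulLog_add_negMulLog_one_sub, ← probReal_compl_eq_one_sub A.measurableSet]
    ring
  have hgap : c < entR ν (singletonsOn A) - entR ν (fun x => I x = n) := by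
    rw [entR_singletonsOn, entR_prop ν (Set.to_countable _).measurableSet]
    linarith [binEntropy_le_log_two (p := ν.real {x | I x = n}),
      negMulLog_measureReal_nonneg ν (↑A)ᶜ]
  rw [hlabel]
  exact ⟨hcond, hcond ▸ hgap⟩

open Classical in
/-- Let `(L, ν)` be a purely atomic probability space (atoms indexed by a
countable set) with `∑_ℓ -ν(ℓ) log ν(ℓ) = ∞`, and let `c > 0`.  Then `L` can
be partitioned into finite sets `Iₙ` with
`∑_{ℓ ∈ Iₙ} -ν(ℓ) log ν(ℓ) > c + log 2` for all `n`; moreover, for the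
partitions `𝓛ₙ = {L \ Iₙ} ∪ {{ℓ} : ℓ ∈ Iₙ}` one has
`H(𝓛ₙ | ⋁_{k ≠ n} 𝓛ₖ) = H(𝓛ₙ) - H({Iₙ, L \ Iₙ}) > c`. -/
theorem stmt10 [Countable L] [MeasurableSpace L] [MeasurableSingletonClass L]
    (ν : Measure L) [IsProbabilityMeasure ν]
    (hinf : ∑' ℓ : L, ENNReal.ofReal (negMulLog (ν {ℓ}).toReal) = ⊤)
    (c : ℝ) (hc : 0 < c) :
    ∃ I : L → ℕ,
      (∀ n, (I ⁻¹' {n}).Finite) ∧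
      (∀ n, c + Real.log 2 < ∑' ℓ : (I ⁻¹' {n} : Set L), negMulLog (ν {(ℓ : L)}).toReal) ∧
      (∀ n : ℕ,
        condEntSig ν
          (MeasurableSpace.generateFrom
            {S : Set L | ∃ k : ℕ, k ≠ n ∧ ∃ j : Option L,
              S = (fun x => if I x = k then some x else none) ⁻¹' {j}})
          (fun x => if I x = n then some x else none)
        = entR ν (fun x => if I x = n then some x else none)
            - entR ν (fun x => I x = n) ∧
        c < condEntSig ν
          (MeasurableSpace.generateFrom
            {S : Set L | ∃ k : ℕ, k ≠ n ∧ ∃ j : Option L,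
              S = (fun x => if I x = k then some x else none) ⁻¹' {j}})
          (fun x => if I x = n then some x else none)) :=
  stmt10_general ν hinf c
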